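/- Let C be a model knot complex and let t ∈ (0,2). If ΔΥ_C'(t) > 0, then γ²_{C,t}(t) is finite and strictly greater than γ_C(t); equivalently, Υ²_{C,t}(t) < 0. -/
import Mathlib


open scoped BigOperators

/-- A "pre-complex": a finite distinguished basis `B`, a grading `gr`,
bifiltration functions `alg` and `alex`, and a differential recorded by its
matrix `d` over the field `F₂ = ZMod 2`:  `∂ x = ∑ y, d x y • y`. -/
structure PreComplex where
  B : Type
  fB : Fintype B
  dB : DecidableEq B
  gr : B → ℤ
  alg : B → ℤ
  alex : B → ℤ
  d : B → B → ZMod 2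

attribute [instance] PreComplex.fB PreComplex.dB

namespace PreComplex

variable (C : PreComplex)

/-- Chains: F₂-linear combinations of basis elements. -/
abbrev Chain : Type := C.B → ZMod 2

/-- The boundary of a chain, extending `∂ x = ∑ y, d x y • y` linearly. -/
def bdry (c : C.Chain) : C.Chain := fun y => ∑ x, c x * C.d x y

/-- A chain is homogeneous of grading `k`. -/
def isGraded (c : C.Chain) (k : ℤ) : Prop := ∀ x, c x ≠ 0 → C.gr x = k

def isCycle (c : C.Chain) : Prop := C.bdry c = 0

def isBoundary (c : C.Chain) : Prop := ∃ w : C.Chain, C.bdry w = c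

/-- A cycle of grading 0 representing the nonzero class of `H₀(C)`. -/
def GenCycle (z : C.Chain) : Prop :=
  C.isCycle z ∧ C.isGraded z 0 ∧ ¬ C.isBoundary z

/-- The bifiltration level of a basis element. -/
def lev (x : C.B) : ℤ × ℤ := (C.alg x, C.alex x)

/-- A model knot complex: `∂ ∘ ∂ = 0`; `∂` drops the grading by one and does
not increase either filtration; the homology is one dimensional, concentrated
in grading 0; and the minimum over cycles representing the generator of
`H₀(C)` of their maximal `alg` (resp. `alex`) filtration level is 0. -/
def IsModel : Prop :=
  (∀ x z, (∑ y, C.d x y * C.d y z) = 0) ∧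
  (∀ x y, C.d x y ≠ 0 → C.gr y = C.gr x - 1 ∧ C.alg y ≤ C.alg x ∧ C.alex y ≤ C.alex x) ∧
  (∀ k : ℤ, k ≠ 0 → ∀ z : C.Chain, C.isCycle z → C.isGraded z k → C.isBoundary z) ∧
  (∃ z : C.Chain, C.GenCycle z) ∧
  (∀ z z' : C.Chain, C.GenCycle z → C.GenCycle z' → C.isBoundary (z + z')) ∧
  (∃ z : C.Chain, C.GenCycle z ∧ ∀ x, z x ≠ 0 → C.alg x ≤ 0) ∧
  (∀ z : C.Chain, C.GenCycle z → ∃ x, z x ≠ 0 ∧ 0 ≤ C.alg x) ∧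
  (∃ z : C.Chain, C.GenCycle z ∧ ∀ x, z x ≠ 0 → C.alex x ≤ 0) ∧
  (∀ z : C.Chain, C.GenCycle z → ∃ x, z x ≠ 0 ∧ 0 ≤ C.alex x)

/-- An acyclic complex: conditions (i) and (ii) hold but the homology vanishes. -/
def IsAcyclic : Prop :=
  (∀ x z, (∑ y, C.d x y * C.d y z) = 0) ∧
  (∀ x y, C.d x y ≠ 0 → C.gr y = C.gr x - 1 ∧ C.alg y ≤ C.alg x ∧ C.alex y ≤ C.alex x) ∧
  (∀ z : C.Chain, C.isCycle z → C.isBoundary z)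

end PreComplex

/-- `f_t(i,j) = (t/2)·j + (1 − t/2)·i`. -/
noncomputable def fval (t : ℝ) (p : ℤ × ℤ) : ℝ :=
  (t / 2) * (p.2 : ℝ) + (1 - t / 2) * (p.1 : ℝ)

namespace PreComplex

variable (C : PreComplex)

/-- A chain lies in the subcomplex `F_{t,s}`. -/
def inF (t s : ℝ) (c : C.Chain) : Prop :=
  ∀ x, c x ≠ 0 → fval t (C.lev x) ≤ s

/-- `γ_C(t)`: the minimal `s` such that `H₀(F_{t,s}) → H₀(C)` is surjective,
i.e. such that `F_{t,s}` contains a cycle representing the generator. -/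
noncomputable def gamma (t : ℝ) : ℝ :=
  sInf {s : ℝ | ∃ z : C.Chain, C.GenCycle z ∧ C.inF t s z}

/-- The Upsilon invariant `Υ_C(t) = −2 γ_C(t)`. -/
noncomputable def Upsilon (t : ℝ) : ℝ := -2 * C.gamma t

/-- `P`: the set of bifiltration levels of basis elements. -/
def PSet : Set (ℤ × ℤ) := Set.range C.lev

/-- `P_u = { p ∈ P : f_u(p) = γ_C(u) }`. -/
def Pt (u : ℝ) : Set (ℤ × ℤ) := {p ∈ C.PSet | fval u p = C.gamma u}

/-- `p` is the negative pivot point of `C` at `t`. -/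
def IsNegPivot (t : ℝ) (p : ℤ × ℤ) : Prop :=
  ∃ δ₀ > (0 : ℝ), ∀ δ : ℝ, 0 < δ → δ < δ₀ → C.Pt (t - δ) ∩ C.Pt t = {p}

/-- `p` is the positive pivot point of `C` at `t`. -/
def IsPosPivot (t : ℝ) (p : ℤ × ℤ) : Prop :=
  ∃ δ₀ > (0 : ℝ), ∀ δ : ℝ, 0 < δ → δ < δ₀ → C.Pt (t + δ) ∩ C.Pt t = {p}

/-- Cycles in `F_{t−δ, γ_C(t−δ)}` representing the nonzero class of `H₀(C)`. -/
def ZminusAt (t δ : ℝ) : Set C.Chain :=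
  {z | C.GenCycle z ∧ C.inF (t - δ) (C.gamma (t - δ)) z}

/-- Cycles in `F_{t+δ, γ_C(t+δ)}` representing the nonzero class of `H₀(C)`. -/
def ZplusAt (t δ : ℝ) : Set C.Chain :=
  {z | C.GenCycle z ∧ C.inF (t + δ) (C.gamma (t + δ)) z}

/-- `Z⁻`: the (eventual, for all sufficiently small `δ > 0`) set of cycles in
`F_{t−δ, γ_C(t−δ)}` representing the nonzero class of `H₀(C)`. -/
def Zminus (t : ℝ) : Set C.Chain :=
  {z | ∃ δ₀ > (0 : ℝ), ∀ δ : ℝ, 0 < δ → δ < δ₀ → z ∈ C.ZminusAt t δ}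

/-- `Z⁺`: the (eventual, for all sufficiently small `δ > 0`) set of cycles in
`F_{t+δ, γ_C(t+δ)}` representing the nonzero class of `H₀(C)`. -/
def Zplus (t : ℝ) : Set C.Chain :=
  {z | ∃ δ₀ > (0 : ℝ), ∀ δ : ℝ, 0 < δ → δ < δ₀ → z ∈ C.ZplusAt t δ}

/-- A basis element lies in the subcomplex `F_{t,γ_C(t)} + F_{s,r}`. -/
def inRegion (t s r : ℝ) (x : C.B) : Prop :=
  fval t (C.lev x) ≤ C.gamma t ∨ fval s (C.lev x) ≤ r

/-- `z` and `z'` represent the same homology class in `H₀(F_{t,γ_C(t)} + F_{s,r})`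
(over F₂ the difference `z − z'` is `z + z'`). -/
def sameClass (t s r : ℝ) (z z' : C.Chain) : Prop :=
  (∀ x, z x ≠ 0 → C.inRegion t s r x) ∧
  (∀ x, z' x ≠ 0 → C.inRegion t s r x) ∧
  ∃ w : C.Chain, (∀ x, w x ≠ 0 → C.inRegion t s r x) ∧ C.bdry w = z + z'

/-- The set of `r` for which some `z⁻ ∈ Z⁻` and `z⁺ ∈ Z⁺` represent the same
class in `H₀(F_{t,γ_C(t)} + F_{s,r})`. -/
def gamma2Set (t s : ℝ) : Set ℝ :=
  {r | ∃ zm ∈ C.Zminus t, ∃ zp ∈ C.Zplus t, C.sameClass t s r zm zp}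

/-- `γ²_{C,t}(s)`, as an extended real: the minimum of `gamma2Set`
(`−∞` if the condition holds for every `r`). -/
noncomputable def gamma2 (t s : ℝ) : EReal :=
  sInf ((fun r : ℝ => (r : EReal)) '' C.gamma2Set t s)

/-- `Υ²_{C,t}(s) = −2 (γ²_{C,t}(s) − γ_C(t))`. -/
noncomputable def Upsilon2 (t s : ℝ) : EReal :=
  (-2 : EReal) * (C.gamma2 t s - (C.gamma t : EReal))

end PreComplex

/-- The jump of the derivative of `f` at `t`: the right-hand derivative minus
the left-hand derivative. -/
noncomputable def derivJump (f : ℝ → ℝ) (t : ℝ) : ℝ :=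
  derivWithin f (Set.Ici t) t - derivWithin f (Set.Iic t) t

/-- Direct sum of two pre-complexes. -/
def PreComplex.dsum (C A : PreComplex) : PreComplex where
  B := C.B ⊕ A.B
  fB := inferInstance
  dB := inferInstance
  gr := Sum.elim C.gr A.gr
  alg := Sum.elim C.alg A.alg
  alex := Sum.elim C.alex A.alex
  d := fun x y =>
    match x, y with
    | Sum.inl x, Sum.inl y => C.d x y
    | Sum.inr x, Sum.inr y => A.d x y
    | _, _ => 0

/-- Tensor product of two pre-complexes. -/
def PreComplex.tensor (C₁ C₂ : PreComplex) : PreComplex where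
  B := C₁.B × C₂.B
  fB := inferInstance
  dB := inferInstance
  gr := fun x => C₁.gr x.1 + C₂.gr x.2
  alg := fun x => C₁.alg x.1 + C₂.alg x.2
  alex := fun x => C₁.alex x.1 + C₂.alex x.2
  d := fun x y =>
    (if x.2 = y.2 then C₁.d x.1 y.1 else 0) + (if x.1 = y.1 then C₂.d x.2 y.2 else 0)

/-- An isomorphism of pre-complexes: a bijection of the distinguished bases
preserving `gr`, `alg`, `alex`, whose linear extension commutes with the
differentials. -/
def PreComplex.Iso (C₁ C₂ : PreComplex) : Prop :=
  ∃ e : C₁.B ≃ C₂.B,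
    (∀ x, C₂.gr (e x) = C₁.gr x) ∧
    (∀ x, C₂.alg (e x) = C₁.alg x) ∧
    (∀ x, C₂.alex (e x) = C₁.alex x) ∧
    (∀ x y, C₂.d (e x) (e y) = C₁.d x y)

/-- Stable equivalence of pre-complexes: isomorphism after adding acyclic
summands. -/
def PreComplex.StablyEquiv (C₁ C₂ : PreComplex) : Prop :=
  ∃ A₁ A₂ : PreComplex, A₁.IsAcyclic ∧ A₂.IsAcyclic ∧ (C₁.dsum A₁).Iso (C₂.dsum A₂)


-- ===== auxiliary development =====


/-- `f` is linear (anchored at `t`) on a right neighbourhood of `t`. -/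
def IsLinR (f : ℝ → ℝ) (t : ℝ) : Prop :=
  ∃ b ε : ℝ, 0 < ε ∧ ∀ u, t ≤ u → u < t + ε → f u = f t + b * (u - t)

/-- `f` is linear (anchored at `t`) on a left neighbourhood of `t`. -/
def IsLinL (f : ℝ → ℝ) (t : ℝ) : Prop :=
  ∃ b ε : ℝ, 0 < ε ∧ ∀ u, u ≤ t → t - ε < u → f u = f t + b * (u - t)

lemma linR_min {f g : ℝ → ℝ} {t : ℝ} (hf : IsLinR f t) (hg : IsLinR g t) :
    IsLinR (fun u => min (f u) (g u)) t := by
  obtain ⟨b₁, ε₁, hε₁, h₁⟩ := hf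
  obtain ⟨b₂, ε₂, hε₂, h₂⟩ := hg
  have habs : ∀ u : ℝ, t ≤ u → u < t + (g t - f t)/(|b₁| + |b₂| + 1) → f t < g t →
      f t + b₁ * (u - t) < g t + b₂ * (u - t) := by
    intro u hu hu' hfg
    have hM : (0:ℝ) < |b₁| + |b₂| + 1 := by positivity
    have h3 : (u - t) * (|b₁| + |b₂| + 1) < g t - f t := by
      have : u - t < (g t - f t)/(|b₁| + |b₂| + 1) := by linarith
      exact (lt_div_iff₀ hM).mp this
    have hb1 : b₁ ≤ |b₁| := le_abs_self _
    have hb2 : -|b₂| ≤ b₂ := neg_abs_le _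
    nlinarith [sub_nonneg.mpr hu]
  rcases lt_trichotomy (f t) (g t) with h | h | h
  · refine ⟨b₁, min (min ε₁ ε₂) ((g t - f t) / (|b₁| + |b₂| + 1)),
      lt_min (lt_min hε₁ hε₂) (div_pos (sub_pos.mpr h) (by positivity)), ?_⟩
    intro u hu hu'
    have hm1 := min_le_left (min ε₁ ε₂) ((g t - f t) / (|b₁| + |b₂| + 1))
    have hm2 := min_le_right (min ε₁ ε₂) ((g t - f t) / (|b₁| + |b₂| + 1))
    have hm3 := min_le_left ε₁ ε₂
    have hm4 := min_le_right ε₁ ε₂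
    have e₁ := h₁ u hu (by linarith)
    have e₂ := h₂ u hu (by linarith)
    have hlt : f u < g u := by rw [e₁, e₂]; exact habs u hu (by linarith) h
    show min (f u) (g u) = min (f t) (g t) + b₁ * (u - t)
    rw [min_eq_left hlt.le, min_eq_left h.le, e₁]
  · refine ⟨min b₁ b₂, min ε₁ ε₂, lt_min hε₁ hε₂, ?_⟩
    intro u hu hu'
    have hm3 := min_le_left ε₁ ε₂
    have hm4 := min_le_right ε₁ ε₂
    have e₁ := h₁ u hu (by linarith)
    have e₂ := h₂ u hu (by linarith)
    have hd : 0 ≤ u - t := by linarith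
    show min (f u) (g u) = min (f t) (g t) + min b₁ b₂ * (u - t)
    rw [e₁, e₂, ← h, min_self]
    rcases le_total b₁ b₂ with hb | hb
    · rw [min_eq_left hb,
        min_eq_left (by nlinarith : f t + b₁ * (u - t) ≤ f t + b₂ * (u - t))]
    · rw [min_eq_right hb,
        min_eq_right (by nlinarith : f t + b₂ * (u - t) ≤ f t + b₁ * (u - t))]
  · refine ⟨b₂, min (min ε₁ ε₂) ((f t - g t) / (|b₂| + |b₁| + 1)),
      lt_min (lt_min hε₁ hε₂) (div_pos (sub_pos.mpr h) (by positivity)), ?_⟩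
    intro u hu hu'
    have hm1 := min_le_left (min ε₁ ε₂) ((f t - g t) / (|b₂| + |b₁| + 1))
    have hm2 := min_le_right (min ε₁ ε₂) ((f t - g t) / (|b₂| + |b₁| + 1))
    have hm3 := min_le_left ε₁ ε₂
    have hm4 := min_le_right ε₁ ε₂
    have e₁ := h₁ u hu (by linarith)
    have e₂ := h₂ u hu (by linarith)
    have habs' : ∀ v : ℝ, t ≤ v → v < t + (f t - g t)/(|b₂| + |b₁| + 1) → g t < f t →
        g t + b₂ * (v - t) < f t + b₁ * (v - t) := by
      intro v hv hv' hgf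
      have hM : (0:ℝ) < |b₂| + |b₁| + 1 := by positivity
      have h3 : (v - t) * (|b₂| + |b₁| + 1) < f t - g t := by
        have : v - t < (f t - g t)/(|b₂| + |b₁| + 1) := by linarith
        exact (lt_div_iff₀ hM).mp this
      have hb1 : b₂ ≤ |b₂| := le_abs_self _
      have hb2 : -|b₁| ≤ b₁ := neg_abs_le _
      nlinarith [sub_nonneg.mpr hv]
    have hlt : g u < f u := by rw [e₁, e₂]; exact habs' u hu (by linarith) h
    show min (f u) (g u) = min (f t) (g t) + b₂ * (u - t)
    rw [min_eq_right hlt.le, min_eq_right h.le, e₂]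

lemma linR_neg {f : ℝ → ℝ} {t : ℝ} (hf : IsLinR f t) : IsLinR (fun u => -(f u)) t := by
  obtain ⟨b, ε, hε, h⟩ := hf
  exact ⟨-b, ε, hε, fun u hu hu' => by simp [h u hu hu']; ring⟩

lemma linR_max {f g : ℝ → ℝ} {t : ℝ} (hf : IsLinR f t) (hg : IsLinR g t) :
    IsLinR (fun u => max (f u) (g u)) t := by
  obtain ⟨b, ε, hε, h⟩ := linR_min (linR_neg hf) (linR_neg hg)
  refine ⟨-b, ε, hε, fun u hu hu' => ?_⟩
  have := h u hu hu'
  simp only [min_neg_neg] at this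
  show max (f u) (g u) = max (f t) (g t) + -b * (u - t)
  linarith [this]

lemma isLinL_iff_reflect {f : ℝ → ℝ} {t : ℝ} :
    IsLinL f t ↔ IsLinR (fun u => f (2*t - u)) t := by
  constructor
  · rintro ⟨b, ε, hε, h⟩
    refine ⟨-b, ε, hε, fun u hu hu' => ?_⟩
    have := h (2*t - u) (by linarith) (by linarith)
    simp only [show 2*t - t = t by ring] at this ⊢
    rw [this]; ring
  · rintro ⟨b, ε, hε, h⟩
    refine ⟨-b, ε, hε, fun u hu hu' => ?_⟩
    have := h (2*t - u) (by linarith) (by linarith)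
    simp only [show 2*t - (2*t - u) = u by ring, show 2*t - t = t by ring] at this
    rw [this]; ring

lemma linL_min {f g : ℝ → ℝ} {t : ℝ} (hf : IsLinL f t) (hg : IsLinL g t) :
    IsLinL (fun u => min (f u) (g u)) t := by
  rw [isLinL_iff_reflect] at hf hg ⊢
  exact linR_min hf hg

lemma linL_max {f g : ℝ → ℝ} {t : ℝ} (hf : IsLinL f t) (hg : IsLinL g t) :
    IsLinL (fun u => max (f u) (g u)) t := by
  rw [isLinL_iff_reflect] at hf hg ⊢
  exact linR_max hf hg

lemma linR_sup' {ι : Type*} (S : Finset ι) (F : ι → ℝ → ℝ) (t : ℝ) :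
    ∀ (hS : S.Nonempty), (∀ i ∈ S, IsLinR (F i) t) →
      IsLinR (fun u => S.sup' hS (fun i => F i u)) t := by
  induction S using Finset.cons_induction with
  | empty => intro hS _; simp at hS
  | cons a s ha ih =>
    intro hS h
    rcases s.eq_empty_or_nonempty with rfl | hs
    · simpa using h a (by simp)
    · have hrec := ih hs (fun i hi => h i (by simp [hi]))
      simp only [Finset.sup'_cons hs]
      exact linR_max (h a (by simp)) hrec

lemma linR_inf' {ι : Type*} (S : Finset ι) (F : ι → ℝ → ℝ) (t : ℝ) :
    ∀ (hS : S.Nonempty), (∀ i ∈ S, IsLinR (F i) t) →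
      IsLinR (fun u => S.inf' hS (fun i => F i u)) t := by
  induction S using Finset.cons_induction with
  | empty => intro hS _; simp at hS
  | cons a s ha ih =>
    intro hS h
    rcases s.eq_empty_or_nonempty with rfl | hs
    · simpa using h a (by simp)
    · have hrec := ih hs (fun i hi => h i (by simp [hi]))
      simp only [Finset.inf'_cons hs]
      exact linR_min (h a (by simp)) hrec

lemma linL_sup' {ι : Type*} (S : Finset ι) (F : ι → ℝ → ℝ) (t : ℝ) :
    ∀ (hS : S.Nonempty), (∀ i ∈ S, IsLinL (F i) t) →
      IsLinL (fun u => S.sup' hS (fun i => F i u)) t := by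
  induction S using Finset.cons_induction with
  | empty => intro hS _; simp at hS
  | cons a s ha ih =>
    intro hS h
    rcases s.eq_empty_or_nonempty with rfl | hs
    · simpa using h a (by simp)
    · have hrec := ih hs (fun i hi => h i (by simp [hi]))
      simp only [Finset.sup'_cons hs]
      exact linL_max (h a (by simp)) hrec

lemma linL_inf' {ι : Type*} (S : Finset ι) (F : ι → ℝ → ℝ) (t : ℝ) :
    ∀ (hS : S.Nonempty), (∀ i ∈ S, IsLinL (F i) t) →
      IsLinL (fun u => S.inf' hS (fun i => F i u)) t := by
  induction S using Finset.cons_induction with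
  | empty => intro hS _; simp at hS
  | cons a s ha ih =>
    intro hS h
    rcases s.eq_empty_or_nonempty with rfl | hs
    · simpa using h a (by simp)
    · have hrec := ih hs (fun i hi => h i (by simp [hi]))
      simp only [Finset.inf'_cons hs]
      exact linL_min (h a (by simp)) hrec

lemma linR_derivWithin {f : ℝ → ℝ} {t b ε : ℝ} (hε : 0 < ε)
    (h : ∀ u, t ≤ u → u < t + ε → f u = f t + b * (u - t)) :
    derivWithin f (Set.Ici t) t = b := by
  have hd : HasDerivWithinAt (fun u => f t + b * (u - t)) b (Set.Ici t) t := by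
    exact (((hasDerivAt_id t).sub_const t).const_mul b).const_add (f t) |>.hasDerivWithinAt
      |>.congr_deriv (by ring)
  have hev : f =ᶠ[nhdsWithin t (Set.Ici t)] (fun u => f t + b * (u - t)) := by
    have hmem : Set.Ico t (t + ε) ∈ nhdsWithin t (Set.Ici t) := by
      rw [show Set.Ico t (t+ε) = Set.Ici t ∩ Set.Iio (t+ε) from rfl]
      exact Filter.inter_mem self_mem_nhdsWithin
        (nhdsWithin_le_nhds (Iio_mem_nhds (by linarith)))
    filter_upwards [hmem] with u hu
    exact h u hu.1 hu.2
  have : HasDerivWithinAt f b (Set.Ici t) t :=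
    hd.congr_of_eventuallyEq hev (by simp)
  exact this.derivWithin (uniqueDiffOn_Ici t t Set.self_mem_Ici)

lemma linL_derivWithin {f : ℝ → ℝ} {t b ε : ℝ} (hε : 0 < ε)
    (h : ∀ u, u ≤ t → t - ε < u → f u = f t + b * (u - t)) :
    derivWithin f (Set.Iic t) t = b := by
  have hd : HasDerivWithinAt (fun u => f t + b * (u - t)) b (Set.Iic t) t := by
    exact (((hasDerivAt_id t).sub_const t).const_mul b).const_add (f t) |>.hasDerivWithinAt
      |>.congr_deriv (by ring)
  have hev : f =ᶠ[nhdsWithin t (Set.Iic t)] (fun u => f t + b * (u - t)) := by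
    have hmem : Set.Ioc (t - ε) t ∈ nhdsWithin t (Set.Iic t) := by
      rw [show Set.Ioc (t-ε) t = Set.Iic t ∩ Set.Ioi (t-ε) by
        ext u; simp [Set.mem_Ioc, Set.mem_Iic, Set.mem_Ioi, and_comm]]
      exact Filter.inter_mem self_mem_nhdsWithin
        (nhdsWithin_le_nhds (Ioi_mem_nhds (by linarith)))
    filter_upwards [hmem] with u hu
    exact h u hu.2 hu.1
  have : HasDerivWithinAt f b (Set.Iic t) t :=
    hd.congr_of_eventuallyEq hev (by simp)
  exact this.derivWithin (uniqueDiffOn_Iic t t Set.self_mem_Iic)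


/-- slope of `u ↦ fval u p`. -/
noncomputable def slp (p : ℤ × ℤ) : ℝ := (((p.2 : ℝ)) - ((p.1 : ℝ))) / 2

lemma fval_affine (u : ℝ) (p : ℤ × ℤ) : fval u p = (p.1 : ℝ) + u * slp p := by
  unfold fval slp; ring

lemma fval_shift (u t : ℝ) (p : ℤ × ℤ) : fval u p = fval t p + (u - t) * slp p := by
  rw [fval_affine u p, fval_affine t p]; ring

lemma fval_mono {t : ℝ} (ht0 : 0 < t) (ht2 : t < 2) {p q : ℤ × ℤ}
    (h1 : q.1 ≤ p.1) (h2 : q.2 ≤ p.2) : fval t q ≤ fval t p := by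
  unfold fval
  have c1 : (q.1 : ℝ) ≤ (p.1 : ℝ) := by exact_mod_cast h1
  have c2 : (q.2 : ℝ) ≤ (p.2 : ℝ) := by exact_mod_cast h2
  nlinarith

lemma lev_eq_of_fval_eq {t : ℝ} (ht0 : 0 < t) (ht2 : t < 2) {p q : ℤ × ℤ}
    (h1 : q.1 ≤ p.1) (h2 : q.2 ≤ p.2) (heq : fval t q = fval t p) : q = p := by
  unfold fval at heq
  have c1 : (q.1 : ℝ) ≤ (p.1 : ℝ) := by exact_mod_cast h1
  have c2 : (q.2 : ℝ) ≤ (p.2 : ℝ) := by exact_mod_cast h2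
  have e1 : (q.1 : ℝ) = (p.1 : ℝ) := by nlinarith
  have e2 : (q.2 : ℝ) = (p.2 : ℝ) := by nlinarith
  have : q.1 = p.1 := by exact_mod_cast e1
  have : q.2 = p.2 := by exact_mod_cast e2
  exact Prod.ext ‹q.1 = p.1› ‹q.2 = p.2›

namespace PreComplex

variable (C : PreComplex)

lemma zmod2_add_self (a : ZMod 2) : a + a = 0 := by
  have : ∀ b : ZMod 2, b + b = 0 := by decide
  exact this a

lemma bdry_zero : C.bdry 0 = 0 := by
  funext y; simp [bdry]

lemma bdry_add (v w : C.Chain) : C.bdry (v + w) = C.bdry v + C.bdry w := by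
  funext y
  show (∑ x, (v x + w x) * C.d x y) = (∑ x, v x * C.d x y) + (∑ x, w x * C.d x y)
  rw [← Finset.sum_add_distrib]
  exact Finset.sum_congr rfl fun x _ => add_mul _ _ _

lemma bdry_bdry (h : ∀ x z, (∑ y, C.d x y * C.d y z) = 0) (w : C.Chain) :
    C.bdry (C.bdry w) = 0 := by
  funext z
  show (∑ y, (∑ x, w x * C.d x y) * C.d y z) = 0
  have : ∀ y, (∑ x, w x * C.d x y) * C.d y z = ∑ x, w x * (C.d x y * C.d y z) := by
    intro y; rw [Finset.sum_mul]; exact Finset.sum_congr rfl fun x _ => by ring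
  rw [Finset.sum_congr rfl fun y _ => this y, Finset.sum_comm]
  rw [Finset.sum_congr rfl (fun x _ => (Finset.mul_sum _ _ _).symm)]
  simp [h]

/-- support of a chain, as a Finset -/
def suppF (z : C.Chain) : Finset C.B := Finset.univ.filter (fun x => z x ≠ 0)

lemma mem_suppF {z : C.Chain} {x : C.B} : x ∈ C.suppF z ↔ z x ≠ 0 := by
  simp [suppF]

open Classical in
/-- the set of generating cycles -/
noncomputable def GCset : Finset C.Chain := Finset.univ.filter (fun z => C.GenCycle z)

lemma mem_GCset {z : C.Chain} : z ∈ C.GCset ↔ C.GenCycle z := by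
  classical
  simp [GCset]

lemma suppF_nonempty {z : C.Chain} (hz : C.GenCycle z) : (C.suppF z).Nonempty := by
  rcases Finset.eq_empty_or_nonempty (C.suppF z) with h | h
  · exfalso
    apply hz.2.2
    refine ⟨0, ?_⟩
    rw [C.bdry_zero]
    funext x
    by_contra hx
    have : x ∈ C.suppF z := C.mem_suppF.mpr (fun hc => hx hc.symm)
    simp [h] at this
  · exact h

/-- max of `fval u` over the support (junk value 0 for empty support) -/
noncomputable def gmax (z : C.Chain) (u : ℝ) : ℝ :=
  if h : (C.suppF z).Nonempty then (C.suppF z).sup' h (fun x => fval u (C.lev x)) else 0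

lemma gmax_eq {z : C.Chain} (h : (C.suppF z).Nonempty) (u : ℝ) :
    C.gmax z u = (C.suppF z).sup' h (fun x => fval u (C.lev x)) := dif_pos h

lemma le_gmax {z : C.Chain} {x : C.B} (hx : z x ≠ 0) (u : ℝ) :
    fval u (C.lev x) ≤ C.gmax z u := by
  have hmem : x ∈ C.suppF z := C.mem_suppF.mpr hx
  rw [C.gmax_eq ⟨x, hmem⟩ u]
  exact Finset.le_sup' (fun x => fval u (C.lev x)) hmem

lemma gmax_le {z : C.Chain} (h : (C.suppF z).Nonempty) {u s : ℝ}
    (hs : ∀ x, z x ≠ 0 → fval u (C.lev x) ≤ s) : C.gmax z u ≤ s := by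
  rw [C.gmax_eq h u]
  exact Finset.sup'_le h _ fun x hx => hs x (C.mem_suppF.mp hx)

lemma exists_gmax {z : C.Chain} (h : (C.suppF z).Nonempty) (u : ℝ) :
    ∃ x, z x ≠ 0 ∧ C.gmax z u = fval u (C.lev x) := by
  obtain ⟨x, hx, he⟩ := Finset.exists_mem_eq_sup' h (fun x => fval u (C.lev x))
  exact ⟨x, C.mem_suppF.mp hx, by rw [C.gmax_eq h u, he]⟩

lemma inF_iff_gmax {z : C.Chain} (hz : C.GenCycle z) (u s : ℝ) :
    C.inF u s z ↔ C.gmax z u ≤ s := by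
  constructor
  · intro h; exact C.gmax_le (C.suppF_nonempty hz) h
  · intro h x hx; exact le_trans (C.le_gmax hx u) h

lemma GCset_nonempty (hC : C.IsModel) : (C.GCset).Nonempty := by
  obtain ⟨z, hz⟩ := hC.2.2.2.1
  exact ⟨z, C.mem_GCset.mpr hz⟩

/-- the candidate value for `gamma` -/
noncomputable def gam (u : ℝ) : ℝ :=
  if h : (C.GCset).Nonempty then (C.GCset).inf' h (fun z => C.gmax z u) else 0

lemma gam_eq (h : (C.GCset).Nonempty) (u : ℝ) :
    C.gam u = (C.GCset).inf' h (fun z => C.gmax z u) := dif_pos h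

lemma gam_le {z : C.Chain} (hz : C.GenCycle z) (u : ℝ) : C.gam u ≤ C.gmax z u := by
  have hmem : z ∈ C.GCset := C.mem_GCset.mpr hz
  rw [C.gam_eq ⟨z, hmem⟩ u]
  exact Finset.inf'_le _ hmem

lemma exists_gam (h : (C.GCset).Nonempty) (u : ℝ) :
    ∃ z, C.GenCycle z ∧ C.gmax z u = C.gam u := by
  obtain ⟨z, hz, he⟩ := Finset.exists_mem_eq_inf' h (fun z => C.gmax z u)
  exact ⟨z, C.mem_GCset.mp hz, by rw [C.gam_eq h u, he]⟩

lemma gamma_eq_gam (hC : C.IsModel) (u : ℝ) : C.gamma u = C.gam u := by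
  have hne := C.GCset_nonempty hC
  have hset : {s : ℝ | ∃ z : C.Chain, C.GenCycle z ∧ C.inF u s z} = Set.Ici (C.gam u) := by
    ext s
    constructor
    · rintro ⟨z, hz, hF⟩
      have := (C.inF_iff_gmax hz u s).mp hF
      exact le_trans (C.gam_le hz u) this
    · intro hs
      obtain ⟨z, hz, he⟩ := C.exists_gam hne u
      exact ⟨z, hz, (C.inF_iff_gmax hz u s).mpr (by rw [he]; exact hs)⟩
  rw [gamma, hset, csInf_Ici]

lemma linR_gmax {z : C.Chain} (h : (C.suppF z).Nonempty) (t : ℝ) :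
    IsLinR (C.gmax z) t := by
  have : C.gmax z = fun u => (C.suppF z).sup' h (fun x => fval u (C.lev x)) := by
    funext u; exact C.gmax_eq h u
  rw [this]
  exact linR_sup' _ (fun x => fun u => fval u (C.lev x)) t _
    (fun x _ => ⟨slp (C.lev x), 1, one_pos, fun u _ _ => by
      show fval u (C.lev x) = fval t (C.lev x) + slp (C.lev x) * (u - t)
      rw [fval_shift u t (C.lev x)]; ring⟩)

lemma linL_gmax {z : C.Chain} (h : (C.suppF z).Nonempty) (t : ℝ) :
    IsLinL (C.gmax z) t := by
  have : C.gmax z = fun u => (C.suppF z).sup' h (fun x => fval u (C.lev x)) := by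
    funext u; exact C.gmax_eq h u
  rw [this]
  exact linL_sup' _ (fun x => fun u => fval u (C.lev x)) t _
    (fun x _ => ⟨slp (C.lev x), 1, one_pos, fun u _ _ => by
      show fval u (C.lev x) = fval t (C.lev x) + slp (C.lev x) * (u - t)
      rw [fval_shift u t (C.lev x)]; ring⟩)

lemma linR_gam (hC : C.IsModel) (t : ℝ) : IsLinR (C.gam) t := by
  have hne := C.GCset_nonempty hC
  have : C.gam = fun u => (C.GCset).inf' hne (fun z => C.gmax z u) := by
    funext u; exact C.gam_eq hne u
  rw [this]
  exact linR_inf' _ (fun z => C.gmax z) t hne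
    (fun z hz => C.linR_gmax (C.suppF_nonempty (C.mem_GCset.mp hz)) t)

lemma linL_gam (hC : C.IsModel) (t : ℝ) : IsLinL (C.gam) t := by
  have hne := C.GCset_nonempty hC
  have : C.gam = fun u => (C.GCset).inf' hne (fun z => C.gmax z u) := by
    funext u; exact C.gam_eq hne u
  rw [this]
  exact linL_inf' _ (fun z => C.gmax z) t hne
    (fun z hz => C.linL_gmax (C.suppF_nonempty (C.mem_GCset.mp hz)) t)

end PreComplex


-- ===== construction of Z⁻ / Z⁺ representatives and slope extraction =====

lemma common_linL {ι : Type*} (S : Finset ι) (F : ι → ℝ → ℝ) (t : ℝ)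
    (h : ∀ i ∈ S, IsLinL (F i) t) :
    ∃ ε > (0:ℝ), ∀ i ∈ S, ∃ b, ∀ u, u ≤ t → t - ε < u → F i u = F i t + b * (u - t) := by
  classical
  induction S using Finset.cons_induction with
  | empty => exact ⟨1, one_pos, by simp⟩
  | cons a s ha ih =>
    obtain ⟨ε₁, hε₁, h₁⟩ := ih (fun i hi => h i (by simp [hi]))
    obtain ⟨b, ε₂, hε₂, h₂⟩ := h a (by simp)
    refine ⟨min ε₁ ε₂, lt_min hε₁ hε₂, ?_⟩
    intro i hi
    rcases Finset.mem_cons.mp hi with rfl | hi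
    · exact ⟨b, fun u hu hu' => h₂ u hu (by
        have := min_le_right ε₁ ε₂; linarith)⟩
    · obtain ⟨b', hb'⟩ := h₁ i hi
      exact ⟨b', fun u hu hu' => hb' u hu (by
        have := min_le_left ε₁ ε₂; linarith)⟩

lemma common_linR {ι : Type*} (S : Finset ι) (F : ι → ℝ → ℝ) (t : ℝ)
    (h : ∀ i ∈ S, IsLinR (F i) t) :
    ∃ ε > (0:ℝ), ∀ i ∈ S, ∃ b, ∀ u, t ≤ u → u < t + ε → F i u = F i t + b * (u - t) := by
  classical
  induction S using Finset.cons_induction with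
  | empty => exact ⟨1, one_pos, by simp⟩
  | cons a s ha ih =>
    obtain ⟨ε₁, hε₁, h₁⟩ := ih (fun i hi => h i (by simp [hi]))
    obtain ⟨b, ε₂, hε₂, h₂⟩ := h a (by simp)
    refine ⟨min ε₁ ε₂, lt_min hε₁ hε₂, ?_⟩
    intro i hi
    rcases Finset.mem_cons.mp hi with rfl | hi
    · exact ⟨b, fun u hu hu' => h₂ u hu (by
        have := min_le_right ε₁ ε₂; linarith)⟩
    · obtain ⟨b', hb'⟩ := h₁ i hi
      exact ⟨b', fun u hu hu' => hb' u hu (by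
        have := min_le_left ε₁ ε₂; linarith)⟩

namespace PreComplex

variable (C : PreComplex)

lemma exists_zminus (hC : C.IsModel) {t b ε : ℝ} (hε : 0 < ε)
    (hlin : ∀ u, u ≤ t → t - ε < u → C.gam u = C.gam t + b * (u - t)) :
    ∃ z, C.GenCycle z ∧ ∃ ε' > (0:ℝ), ε' ≤ ε ∧
      ∀ u, u ≤ t → t - ε' < u → C.gmax z u = C.gam u := by
  obtain ⟨ε₁, hε₁, h₁⟩ := common_linL C.GCset (fun z => C.gmax z) t
    (fun z hz => C.linL_gmax (C.suppF_nonempty (C.mem_GCset.mp hz)) t)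
  set ε₀ := min ε ε₁ with hε₀def
  have hε₀ : 0 < ε₀ := lt_min hε hε₁
  have hε₀ε : ε₀ ≤ ε := min_le_left _ _
  have hε₀ε₁ : ε₀ ≤ ε₁ := min_le_right _ _
  set u₀ := t - ε₀ / 2 with hu₀
  obtain ⟨z, hz, hze⟩ := C.exists_gam (C.GCset_nonempty hC) u₀
  obtain ⟨bz, hbz⟩ := h₁ z (C.mem_GCset.mpr hz)
  -- three point argument
  have hA0 : C.gam t ≤ C.gmax z t := C.gam_le hz t
  have e0 : C.gmax z u₀ = C.gam u₀ := hze
  have eg : C.gam u₀ = C.gam t + b * (u₀ - t) := hlin u₀ (by simp [hu₀]; linarith) (by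
    rw [hu₀]; linarith)
  have ez : C.gmax z u₀ = C.gmax z t + bz * (u₀ - t) := hbz u₀ (by simp [hu₀]; linarith) (by
    rw [hu₀]; linarith)
  set u₁ := t - 3 * ε₀ / 4 with hu₁
  have eg1 : C.gam u₁ = C.gam t + b * (u₁ - t) := hlin u₁ (by rw [hu₁]; linarith) (by
    rw [hu₁]; linarith)
  have ez1 : C.gmax z u₁ = C.gmax z t + bz * (u₁ - t) := hbz u₁ (by rw [hu₁]; linarith) (by
    rw [hu₁]; linarith)
  have h1 : C.gam u₁ ≤ C.gmax z u₁ := C.gam_le hz u₁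
  have hA : C.gmax z t - C.gam t = (bz - b) * (ε₀ / 2) := by
    rw [eg, ez] at e0; rw [hu₀] at e0; ring_nf at e0 ⊢; linarith
  have hB : bz - b ≤ 0 := by
    rw [eg1, ez1] at h1; rw [hu₁] at h1; nlinarith
  have hAz : C.gmax z t = C.gam t := by nlinarith
  have hBz : bz = b := by nlinarith
  refine ⟨z, hz, ε₀, hε₀, hε₀ε, ?_⟩
  intro u hu hu'
  rw [hbz u hu (by linarith), hlin u hu (by linarith), hAz, hBz]

lemma exists_zplus (hC : C.IsModel) {t b ε : ℝ} (hε : 0 < ε)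
    (hlin : ∀ u, t ≤ u → u < t + ε → C.gam u = C.gam t + b * (u - t)) :
    ∃ z, C.GenCycle z ∧ ∃ ε' > (0:ℝ), ε' ≤ ε ∧
      ∀ u, t ≤ u → u < t + ε' → C.gmax z u = C.gam u := by
  obtain ⟨ε₁, hε₁, h₁⟩ := common_linR C.GCset (fun z => C.gmax z) t
    (fun z hz => C.linR_gmax (C.suppF_nonempty (C.mem_GCset.mp hz)) t)
  set ε₀ := min ε ε₁ with hε₀def
  have hε₀ : 0 < ε₀ := lt_min hε hε₁
  have hε₀ε : ε₀ ≤ ε := min_le_left _ _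
  have hε₀ε₁ : ε₀ ≤ ε₁ := min_le_right _ _
  set u₀ := t + ε₀ / 2 with hu₀
  obtain ⟨z, hz, hze⟩ := C.exists_gam (C.GCset_nonempty hC) u₀
  obtain ⟨bz, hbz⟩ := h₁ z (C.mem_GCset.mpr hz)
  have hA0 : C.gam t ≤ C.gmax z t := C.gam_le hz t
  have e0 : C.gmax z u₀ = C.gam u₀ := hze
  have eg : C.gam u₀ = C.gam t + b * (u₀ - t) := hlin u₀ (by rw [hu₀]; linarith) (by
    rw [hu₀]; linarith)
  have ez : C.gmax z u₀ = C.gmax z t + bz * (u₀ - t) := hbz u₀ (by rw [hu₀]; linarith) (by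
    rw [hu₀]; linarith)
  set u₁ := t + 3 * ε₀ / 4 with hu₁
  have eg1 : C.gam u₁ = C.gam t + b * (u₁ - t) := hlin u₁ (by rw [hu₁]; linarith) (by
    rw [hu₁]; linarith)
  have ez1 : C.gmax z u₁ = C.gmax z t + bz * (u₁ - t) := hbz u₁ (by rw [hu₁]; linarith) (by
    rw [hu₁]; linarith)
  have h1 : C.gam u₁ ≤ C.gmax z u₁ := C.gam_le hz u₁
  have hA : C.gmax z t - C.gam t = (b - bz) * (ε₀ / 2) := by
    rw [eg, ez] at e0; rw [hu₀] at e0; ring_nf at e0 ⊢; linarith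
  have hB : b - bz ≤ 0 := by
    rw [eg1, ez1] at h1; rw [hu₁] at h1; nlinarith
  have hAz : C.gmax z t = C.gam t := by nlinarith
  have hBz : bz = b := by nlinarith
  refine ⟨z, hz, ε₀, hε₀, hε₀ε, ?_⟩
  intro u hu hu'
  rw [hbz u hu (by linarith), hlin u hu (by linarith), hAz, hBz]

lemma mem_zminus (hC : C.IsModel) {t ε' : ℝ} {z : C.Chain} (hz : C.GenCycle z)
    (hε' : 0 < ε') (h : ∀ u, u ≤ t → t - ε' < u → C.gmax z u = C.gam u) :
    z ∈ C.Zminus t := by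
  refine ⟨ε', hε', fun δ hδ hδ' => ⟨hz, ?_⟩⟩
  rw [C.gamma_eq_gam hC, C.inF_iff_gmax hz]
  rw [h (t - δ) (by linarith) (by linarith)]

lemma mem_zplus (hC : C.IsModel) {t ε' : ℝ} {z : C.Chain} (hz : C.GenCycle z)
    (hε' : 0 < ε') (h : ∀ u, t ≤ u → u < t + ε' → C.gmax z u = C.gam u) :
    z ∈ C.Zplus t := by
  refine ⟨ε', hε', fun δ hδ hδ' => ⟨hz, ?_⟩⟩
  rw [C.gamma_eq_gam hC, C.inF_iff_gmax hz]
  rw [h (t + δ) (by linarith) (by linarith)]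

lemma zminus_props (hC : C.IsModel) {t b ε : ℝ} (hε : 0 < ε)
    (hlin : ∀ u, u ≤ t → t - ε < u → C.gam u = C.gam t + b * (u - t))
    {z : C.Chain} (hz : z ∈ C.Zminus t) :
    C.GenCycle z ∧ ∀ x, z x ≠ 0 → fval t (C.lev x) ≤ C.gam t ∧
      (fval t (C.lev x) = C.gam t → b ≤ slp (C.lev x)) := by
  obtain ⟨δ₀, hδ₀, hδ⟩ := hz
  have hgen : C.GenCycle z := (hδ (min δ₀ ε / 2) (by positivity)
    (by have := min_le_left δ₀ ε; linarith)).1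
  refine ⟨hgen, fun x hx => ?_⟩
  have key : ∀ δ : ℝ, 0 < δ → δ < min δ₀ ε →
      fval t (C.lev x) - C.gam t ≤ δ * (slp (C.lev x) - b) := by
    intro δ h0 h1
    have hm1 := min_le_left δ₀ ε
    have hm2 := min_le_right δ₀ ε
    have hin := (hδ δ h0 (by linarith)).2
    have := hin x hx
    rw [C.gamma_eq_gam hC] at this
    rw [hlin (t - δ) (by linarith) (by linarith)] at this
    rw [fval_shift (t - δ) t (C.lev x)] at this
    nlinarith
  have hmin : 0 < min δ₀ ε := lt_min hδ₀ hε
  constructor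
  · by_contra hcon
    push_neg at hcon
    set c := fval t (C.lev x) - C.gam t with hc
    have hcpos : 0 < c := by rw [hc]; linarith
    set δ := min (min δ₀ ε / 2) (c / (|slp (C.lev x) - b| + 1)) with hδdef
    have hδpos : 0 < δ := lt_min (by positivity) (by positivity)
    have h1 : δ < min δ₀ ε := lt_of_le_of_lt (min_le_left _ _) (by linarith)
    have h2 := key δ hδpos h1
    have h3 : δ ≤ c / (|slp (C.lev x) - b| + 1) := min_le_right _ _
    have h4 : δ * (slp (C.lev x) - b) < c := by
      have habs : slp (C.lev x) - b ≤ |slp (C.lev x) - b| := le_abs_self _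
      have hM : (0:ℝ) < |slp (C.lev x) - b| + 1 := by positivity
      have : δ * (|slp (C.lev x) - b| + 1) ≤ c := by
        rw [div_eq_mul_inv] at h3
        calc δ * (|slp (C.lev x) - b| + 1) ≤ (c * (|slp (C.lev x) - b| + 1)⁻¹) *
              (|slp (C.lev x) - b| + 1) := by nlinarith
          _ = c := by field_simp
      nlinarith
    linarith
  · intro heq
    have h2 := key (min δ₀ ε / 2) (by positivity) (by linarith)
    rw [heq] at h2
    nlinarith

lemma zplus_props (hC : C.IsModel) {t b ε : ℝ} (hε : 0 < ε)
    (hlin : ∀ u, t ≤ u → u < t + ε → C.gam u = C.gam t + b * (u - t))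
    {z : C.Chain} (hz : z ∈ C.Zplus t) :
    C.GenCycle z ∧ ∀ x, z x ≠ 0 → fval t (C.lev x) ≤ C.gam t ∧
      (fval t (C.lev x) = C.gam t → slp (C.lev x) ≤ b) := by
  obtain ⟨δ₀, hδ₀, hδ⟩ := hz
  have hgen : C.GenCycle z := (hδ (min δ₀ ε / 2) (by positivity)
    (by have := min_le_left δ₀ ε; linarith)).1
  refine ⟨hgen, fun x hx => ?_⟩
  have key : ∀ δ : ℝ, 0 < δ → δ < min δ₀ ε →
      fval t (C.lev x) - C.gam t ≤ δ * (b - slp (C.lev x)) := by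
    intro δ h0 h1
    have hm1 := min_le_left δ₀ ε
    have hm2 := min_le_right δ₀ ε
    have hin := (hδ δ h0 (by linarith)).2
    have := hin x hx
    rw [C.gamma_eq_gam hC] at this
    rw [hlin (t + δ) (by linarith) (by linarith)] at this
    rw [fval_shift (t + δ) t (C.lev x)] at this
    nlinarith
  have hmin : 0 < min δ₀ ε := lt_min hδ₀ hε
  constructor
  · by_contra hcon
    push_neg at hcon
    set c := fval t (C.lev x) - C.gam t with hc
    have hcpos : 0 < c := by rw [hc]; linarith
    set δ := min (min δ₀ ε / 2) (c / (|b - slp (C.lev x)| + 1)) with hδdef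
    have hδpos : 0 < δ := lt_min (by positivity) (by positivity)
    have h1 : δ < min δ₀ ε := lt_of_le_of_lt (min_le_left _ _) (by linarith)
    have h2 := key δ hδpos h1
    have h3 : δ ≤ c / (|b - slp (C.lev x)| + 1) := min_le_right _ _
    have h4 : δ * (b - slp (C.lev x)) < c := by
      have habs : b - slp (C.lev x) ≤ |b - slp (C.lev x)| := le_abs_self _
      have hM : (0:ℝ) < |b - slp (C.lev x)| + 1 := by positivity
      have : δ * (|b - slp (C.lev x)| + 1) ≤ c := by
        rw [div_eq_mul_inv] at h3
        calc δ * (|b - slp (C.lev x)| + 1) ≤ (c * (|b - slp (C.lev x)| + 1)⁻¹) *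
              (|b - slp (C.lev x)| + 1) := by nlinarith
          _ = c := by field_simp
      nlinarith
    linarith
  · intro heq
    have h2 := key (min δ₀ ε / 2) (by positivity) (by linarith)
    rw [heq] at h2
    nlinarith

lemma slope_lt (hC : C.IsModel) {t : ℝ} (hjump : 0 < derivJump C.Upsilon t)
    {bl εl br εr : ℝ} (hεl : 0 < εl) (hεr : 0 < εr)
    (hl : ∀ u, u ≤ t → t - εl < u → C.gam u = C.gam t + bl * (u - t))
    (hr : ∀ u, t ≤ u → u < t + εr → C.gam u = C.gam t + br * (u - t)) :
    br < bl := by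
  have hU : C.Upsilon = fun u => -2 * C.gam u := by
    funext u; rw [Upsilon, C.gamma_eq_gam hC]
  have hdr : derivWithin C.Upsilon (Set.Ici t) t = -2 * br := by
    rw [hU]
    exact linR_derivWithin hεr (fun u hu hu' => by
      rw [hr u hu hu', hr t le_rfl (by linarith)]; ring)
  have hdl : derivWithin C.Upsilon (Set.Iic t) t = -2 * bl := by
    rw [hU]
    exact linL_derivWithin hεl (fun u hu hu' => by
      rw [hl u hu hu', hl t le_rfl (by linarith)]; ring)
  rw [derivJump, hdr, hdl] at hjump
  linarith

end PreComplex


-- ===== the key lemma =====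

namespace PreComplex

variable (C : PreComplex)

/-- If `zm` (resp. `zp`) is a generating cycle whose support lies in
`F_{t,γ(t)}` with all critical-level slopes `≥ bl` (resp. `≤ br`) with
`br < bl`, then `zm + zp` cannot bound a chain lying in `F_{t,γ(t)}`. -/
lemma key_lemma (hC : C.IsModel) {t : ℝ} (ht0 : 0 < t) (ht2 : t < 2)
    {bl br : ℝ} (hblr : br < bl)
    {zm zp : C.Chain}
    (hzm : C.GenCycle zm)
    (hzmf : ∀ x, zm x ≠ 0 → fval t (C.lev x) ≤ C.gam t ∧
      (fval t (C.lev x) = C.gam t → bl ≤ slp (C.lev x)))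
    (hzp : C.GenCycle zp)
    (hzpf : ∀ x, zp x ≠ 0 → fval t (C.lev x) ≤ C.gam t ∧
      (fval t (C.lev x) = C.gam t → slp (C.lev x) ≤ br))
    {w : C.Chain} (hw : ∀ x, w x ≠ 0 → fval t (C.lev x) ≤ C.gam t)
    (hdw : C.bdry w = zm + zp) : False := by
  classical
  have hch : ∀ c : C.Chain, c + c = 0 := fun c => funext fun x => zmod2_add_self (c x)
  -- filtration facts for the differential
  have hfd : ∀ x y, C.d x y ≠ 0 → fval t (C.lev y) ≤ fval t (C.lev x) := by
    intro x y h
    obtain ⟨-, h1, h2⟩ := hC.2.1 x y h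
    exact fval_mono ht0 ht2 h1 h2
  have hfd' : ∀ x y, C.d x y ≠ 0 → fval t (C.lev y) = fval t (C.lev x) →
      C.lev y = C.lev x := by
    intro x y h he
    obtain ⟨-, h1, h2⟩ := hC.2.1 x y h
    exact lev_eq_of_fval_eq ht0 ht2 h1 h2 he
  -- restrict w to grading 1
  set w₁ : C.Chain := fun x => if C.gr x = 1 then w x else 0 with hw₁def
  have hw₁supp : ∀ x, w₁ x ≠ 0 → w x ≠ 0 ∧ C.gr x = 1 := by
    intro x hx
    by_cases h : C.gr x = 1
    · refine ⟨?_, h⟩; simpa [hw₁def, h] using hx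
    · exfalso; apply hx; simp [hw₁def, h]
  have hdw₁ : C.bdry w₁ = zm + zp := by
    funext y
    by_cases hy : C.gr y = 0
    · have : ∀ x, w₁ x * C.d x y = w x * C.d x y := by
        intro x
        by_cases hx : C.gr x = 1
        · simp [hw₁def, hx]
        · have hd0 : C.d x y = 0 := by
            by_contra hd
            have := (hC.2.1 x y hd).1
            omega
          simp [hw₁def, hx, hd0]
      show (∑ x, w₁ x * C.d x y) = (zm + zp) y
      rw [Finset.sum_congr rfl (fun x _ => this x)]
      exact congrFun hdw y
    · show (∑ x, w₁ x * C.d x y) = (zm + zp) y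
      have h1 : (∑ x, w₁ x * C.d x y) = 0 := by
        apply Finset.sum_eq_zero
        intro x _
        by_cases hx : C.gr x = 1
        · have hd0 : C.d x y = 0 := by
            by_contra hd
            have := (hC.2.1 x y hd).1
            omega
          simp [hd0]
        · simp [hw₁def, hx]
      have h2 : (zm + zp) y = 0 := by
        show zm y + zp y = 0
        have hzmy : zm y = 0 := by
          by_contra h; exact hy (hzm.2.1 y h)
        have hzpy : zp y = 0 := by
          by_contra h; exact hy (hzp.2.1 y h)
        rw [hzmy, hzpy, add_zero]
      rw [h1, h2]
  -- the steep critical part of w₁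
  set P : C.B → Prop := fun x => C.gr x = 1 ∧ fval t (C.lev x) = C.gam t ∧
    bl ≤ slp (C.lev x) with hPdef
  set ws : C.Chain := fun x => if P x then w x else 0 with hwsdef
  have hws_supp : ∀ x, ws x ≠ 0 → w x ≠ 0 ∧ P x := by
    intro x hx
    have hx' : (if P x then w x else 0) ≠ 0 := hx
    by_cases h : P x
    · rw [if_pos h] at hx'; exact ⟨hx', h⟩
    · rw [if_neg h] at hx'; exact absurd rfl hx'
  set zm' : C.Chain := zm + C.bdry ws with hzm'def
  have hzm'app : ∀ y, zm' y = zm y + (∑ x, ws x * C.d x y) := fun y => rfl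
  -- no critical support
  have hcrit : ∀ y, fval t (C.lev y) = C.gam t → zm' y = 0 := by
    intro y hy
    by_cases hsteep : bl ≤ slp (C.lev y)
    · -- steep: the sum over ws equals the sum over w₁
      have hsum : (∑ x, ws x * C.d x y) = (∑ x, w₁ x * C.d x y) := by
        apply Finset.sum_congr rfl
        intro x _
        by_cases hP : P x
        · simp only [hwsdef, hw₁def]
          rw [if_pos hP, if_pos hP.1]
        · by_cases hd : C.d x y = 0
          · simp [hd]
          · by_cases hx1 : C.gr x = 1
            · by_cases hwx : w x = 0
              · simp only [hwsdef, hw₁def]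
                rw [if_neg hP, if_pos hx1, hwx]
              · exfalso
                apply hP
                have hle := hw x hwx
                have hge := hfd x y hd
                have heq : fval t (C.lev x) = C.gam t := le_antisymm hle (by
                  rw [← hy]; exact hge)
                have hleveq : C.lev y = C.lev x := hfd' x y hd (by rw [hy, heq])
                exact ⟨hx1, heq, by rw [← hleveq]; exact hsteep⟩
            · simp only [hwsdef, hw₁def]
              rw [if_neg hP, if_neg hx1]
      have hzpy : zp y = 0 := by
        by_contra h
        have := (hzpf y h).2 hy
        linarith
      have hb1 : (∑ x, w₁ x * C.d x y) = zm y + zp y := by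
        have := congrFun hdw₁ y
        exact this
      rw [hzm'app, hsum, hb1, hzpy, add_zero]
      exact zmod2_add_self (zm y)
    · -- not steep: zm y = 0 and the ws-sum vanishes
      have hzmy : zm y = 0 := by
        by_contra h
        exact hsteep ((hzmf y h).2 hy)
      have hsum0 : (∑ x, ws x * C.d x y) = 0 := by
        apply Finset.sum_eq_zero
        intro x _
        by_cases hws0 : ws x = 0
        · simp [hws0]
        · obtain ⟨hwx, hPx⟩ := hws_supp x hws0
          have hd : C.d x y = 0 := by
            by_contra hd
            have hge := hfd x y hd
            have heq : fval t (C.lev x) = C.gam t := hPx.2.1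
            have hleveq : C.lev y = C.lev x := hfd' x y hd (by rw [hy, heq])
            exact hsteep (by rw [hleveq]; exact hPx.2.2)
          simp [hd]
      rw [hzm'app, hzmy, hsum0, add_zero]
  -- support bound
  have hsupp_le : ∀ y, zm' y ≠ 0 → fval t (C.lev y) ≤ C.gam t := by
    intro y h
    by_cases hzmy : zm y = 0
    · have hsum : (∑ x, ws x * C.d x y) ≠ 0 := by
        intro h0; apply h; rw [hzm'app, hzmy, h0, add_zero]
      obtain ⟨x, -, hx⟩ := Finset.exists_ne_zero_of_sum_ne_zero hsum
      have hws0 : ws x ≠ 0 := fun h0 => hx (by rw [h0, zero_mul])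
      have hd : C.d x y ≠ 0 := fun h0 => hx (by rw [h0, mul_zero])
      obtain ⟨hwx, hPx⟩ := hws_supp x hws0
      exact le_trans (hfd x y hd) (le_of_eq hPx.2.1)
    · exact (hzmf y hzmy).1
  have hstrict : ∀ y, zm' y ≠ 0 → fval t (C.lev y) < C.gam t := by
    intro y h
    rcases lt_or_eq_of_le (hsupp_le y h) with hlt | heq
    · exact hlt
    · exact absurd (hcrit y heq) h
  -- zm' is a generating cycle
  have hgen : C.GenCycle zm' := by
    refine ⟨?_, ?_, ?_⟩
    · show C.bdry zm' = 0
      rw [hzm'def, C.bdry_add, hzm.1, C.bdry_bdry hC.1, add_zero]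
    · intro y hy
      by_cases hzmy : zm y = 0
      · have hsum : (∑ x, ws x * C.d x y) ≠ 0 := by
          intro h0; apply hy; rw [hzm'app, hzmy, h0, add_zero]
        obtain ⟨x, -, hx⟩ := Finset.exists_ne_zero_of_sum_ne_zero hsum
        have hws0 : ws x ≠ 0 := fun h0 => hx (by rw [h0, zero_mul])
        have hd : C.d x y ≠ 0 := fun h0 => hx (by rw [h0, mul_zero])
        obtain ⟨-, hPx⟩ := hws_supp x hws0
        have := (hC.2.1 x y hd).1
        rw [hPx.1] at this
        omega
      · exact hzm.2.1 y hzmy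
    · rintro ⟨v, hv⟩
      apply hzm.2.2
      refine ⟨v + ws, ?_⟩
      rw [C.bdry_add, hv, hzm'def]
      calc zm + C.bdry ws + C.bdry ws = zm + (C.bdry ws + C.bdry ws) := by
            rw [add_assoc]
        _ = zm := by rw [hch (C.bdry ws), add_zero]
  -- contradiction with minimality of gam t
  have hne : (C.suppF zm').Nonempty := C.suppF_nonempty hgen
  obtain ⟨x, hx, he⟩ := C.exists_gmax hne t
  have h1 : C.gam t ≤ C.gmax zm' t := C.gam_le hgen t
  have h2 : C.gmax zm' t < C.gam t := by rw [he]; exact hstrict x hx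
  linarith

end PreComplex


-- ===== the gap value and final assembly helpers =====

namespace PreComplex

variable (C : PreComplex)

lemma exists_gap (t : ℝ) : ∃ ρ : ℝ, C.gam t < ρ ∧
    ∀ x : C.B, fval t (C.lev x) < ρ → fval t (C.lev x) ≤ C.gam t := by
  classical
  set W : Finset ℝ := (Finset.univ.image (fun x : C.B => fval t (C.lev x))).filter
    (fun v => C.gam t < v) with hW
  by_cases h : W.Nonempty
  · refine ⟨W.min' h, ?_, ?_⟩
    · exact (Finset.mem_filter.mp (W.min'_mem h)).2
    · intro x hx
      by_contra hcon
      push_neg at hcon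
      have hmem : fval t (C.lev x) ∈ W := by
        rw [hW]
        exact Finset.mem_filter.mpr ⟨Finset.mem_image.mpr ⟨x, Finset.mem_univ x, rfl⟩, hcon⟩
      exact absurd (W.min'_le _ hmem) (not_le.mpr hx)
  · refine ⟨C.gam t + 1, by linarith, ?_⟩
    intro x hx
    by_contra hcon
    push_neg at hcon
    exact h ⟨fval t (C.lev x),
      Finset.mem_filter.mpr ⟨Finset.mem_image.mpr ⟨x, Finset.mem_univ x, rfl⟩, hcon⟩⟩

end PreComplex

/-- if `ΔΥ_C'(t) > 0` then `γ²_{C,t}(t)` is finite and strictly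
greater than `γ_C(t)`; equivalently `Υ²_{C,t}(t) < 0`. -/
theorem gamma2_pos_of_jump_pos (C : PreComplex) (hC : C.IsModel)
    (t : ℝ) (ht : t ∈ Set.Ioo (0 : ℝ) 2)
    (hjump : 0 < derivJump C.Upsilon t) :
    (C.gamma2Set t t).Nonempty ∧ BddBelow (C.gamma2Set t t) ∧
    (C.gamma t : EReal) < C.gamma2 t t ∧
    C.Upsilon2 t t < 0 := by
  obtain ⟨ht0, ht2⟩ := ht
  obtain ⟨bl, εl, hεl, hl⟩ := C.linL_gam hC t
  obtain ⟨br, εr, hεr, hr⟩ := C.linR_gam hC t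
  have hblr : br < bl := C.slope_lt hC hjump hεl hεr hl hr
  obtain ⟨zmc, hzmc, εm, hεm, hεm', hm⟩ := C.exists_zminus hC hεl hl
  obtain ⟨zpc, hzpc, εp, hεp, hεp', hp⟩ := C.exists_zplus hC hεr hr
  have hzm_mem : zmc ∈ C.Zminus t := C.mem_zminus hC hzmc hεm hm
  have hzp_mem : zpc ∈ C.Zplus t := C.mem_zplus hC hzpc hεp hp
  have hBne : (Finset.univ : Finset C.B).Nonempty := by
    obtain ⟨x, _⟩ := C.suppF_nonempty hzmc
    exact ⟨x, Finset.mem_univ x⟩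
  set R := Finset.univ.sup' hBne (fun x : C.B => fval t (C.lev x)) with hRdef
  have hRle : ∀ x : C.B, fval t (C.lev x) ≤ R := by
    intro x
    rw [hRdef]
    exact Finset.le_sup' (fun y : C.B => fval t (C.lev y)) (Finset.mem_univ x)
  have hRmem : R ∈ C.gamma2Set t t := by
    obtain ⟨w, hw⟩ := hC.2.2.2.2.1 zmc zpc hzmc hzpc
    exact ⟨zmc, hzm_mem, zpc, hzp_mem,
      fun x _ => Or.inr (hRle x), fun x _ => Or.inr (hRle x),
      w, fun x _ => Or.inr (hRle x), hw⟩
  obtain ⟨ρ, hρ1, hρ2⟩ := C.exists_gap t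
  have hnotin : ∀ r : ℝ, r < ρ → r ∉ C.gamma2Set t t := by
    rintro r hrρ ⟨zm, hzm, zp, hzp, h1, h2, w, hw3, hdw⟩
    obtain ⟨hzmgen, hzmprop⟩ := C.zminus_props hC hεl hl hzm
    obtain ⟨hzpgen, hzpprop⟩ := C.zplus_props hC hεr hr hzp
    have hwsupp : ∀ x, w x ≠ 0 → fval t (C.lev x) ≤ C.gam t := by
      intro x hx
      rcases hw3 x hx with h | h
      · rwa [C.gamma_eq_gam hC] at h
      · exact hρ2 x (lt_of_le_of_lt h hrρ)
    exact C.key_lemma hC ht0 ht2 hblr hzmgen hzmprop hzpgen hzpprop hwsupp hdw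
  have hsub : C.gamma2Set t t ⊆ Set.Ici ρ := fun r hr =>
    le_of_not_gt (fun h => hnotin r h hr)
  have hge : (ρ : EReal) ≤ C.gamma2 t t := by
    apply le_sInf
    rintro y ⟨r, hr, rfl⟩
    show (ρ : EReal) ≤ (r : EReal)
    exact_mod_cast hsub hr
  have hle : C.gamma2 t t ≤ (R : EReal) := sInf_le ⟨R, hRmem, rfl⟩
  have hγρ : (C.gamma t : EReal) < (ρ : EReal) := by
    have : C.gamma t < ρ := by rw [C.gamma_eq_gam hC]; exact hρ1
    exact_mod_cast this
  have hglt : (C.gamma t : EReal) < C.gamma2 t t := lt_of_lt_of_le hγρ hge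
  refine ⟨⟨R, hRmem⟩, ⟨ρ, fun r hr => hsub hr⟩, hglt, ?_⟩
  have hnetop : C.gamma2 t t ≠ ⊤ := by
    intro h
    rw [h] at hle
    exact absurd (top_le_iff.mp hle) (EReal.coe_ne_top R)
  have hnebot : C.gamma2 t t ≠ ⊥ := by
    intro h
    rw [h] at hge
    exact absurd (le_bot_iff.mp hge) (EReal.coe_ne_bot ρ)
  set x := (C.gamma2 t t).toReal with hxdef
  have hx : C.gamma2 t t = (x : EReal) := (EReal.coe_toReal hnetop hnebot).symm
  have hxr : C.gamma t < x := by
    rw [hx] at hglt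
    exact_mod_cast hglt
  rw [PreComplex.Upsilon2, hx]
  have hcast : ((x : EReal) - (C.gamma t : EReal)) = ((x - C.gamma t : ℝ) : EReal) := by
    rw [EReal.coe_sub]
  rw [hcast]
  have h2 : (-2 : EReal) = ((-2 : ℝ) : EReal) := by
    have h2' : ((2 : ℝ) : EReal) = (2 : EReal) := by
      rw [show (2:ℝ) = ((2:ℕ):ℝ) by norm_num, show (2:EReal) = ((2:ℕ):EReal) by rfl]
      exact EReal.coe_coe_eq_natCast 2
    rw [show ((-2 : ℝ) : EReal) = -((2:ℝ):EReal) by rw [EReal.coe_neg], h2']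
  rw [h2, ← EReal.coe_mul]
  have : (-2 : ℝ) * (x - C.gamma t) < 0 := by nlinarith
  exact_mod_cast this
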